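/- arXiv:1802.07896 — 5 statements merged into one kernel-verified Lean document; each statement's English description precedes it below -/
import Mathlib

section
/- Let f : ℝ → ℝ be nonexpansive (|f(x) - f(y)| ≤ |x - y| for all x, y) and monotonically increasing. Define h : ℝ → ℝ² by h(x) = (f(x), f(x) - x). Then for every p ≥ 1, h is nonexpansive with respect to the L^p-norm: (|f(x₁)-f(x₂)|^p + |(f(x₁)-x₁)-(f(x₂)-x₂)|^p)^(1/p) ≤ |x₁ - x₂| for all x₁, x₂. -/
/-- The increments of `f` and of `f - id` have opposite signs and add up to that of `id`. -/
theorem abs_sub_add_abs_sub_sub_eq_abs_sub {f : ℝ → ℝ} (hf : ∀ x y : ℝ, |f x - f y| ≤ |x - y|)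
    (hmono : Monotone f) (x y : ℝ) :
    |f x - f y| + |(f x - x) - (f y - y)| = |x - y| := by
  wlog hxy : x ≤ y generalizing x y
  · rw [abs_sub_comm (f x), abs_sub_comm (f x - x), abs_sub_comm x]
    exact this y x (le_of_not_ge hxy)
  have hfxy : f x ≤ f y := hmono hxy
  have hlip := hf y x
  rw [abs_of_nonneg (sub_nonneg.2 hfxy), abs_of_nonneg (sub_nonneg.2 hxy)] at hlip
  rw [abs_of_nonpos (by linarith), abs_of_nonneg (by linarith), abs_of_nonpos (by linarith)]
  ring

theorem stmt_1 (f : ℝ → ℝ) (hf : ∀ x y : ℝ, |f x - f y| ≤ |x - y|)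
    (hmono : Monotone f) (p : ℝ) (hp : 1 ≤ p) (x₁ x₂ : ℝ) :
    (|f x₁ - f x₂| ^ p + |(f x₁ - x₁) - (f x₂ - x₂)| ^ p) ^ (1 / p) ≤ |x₁ - x₂| :=
  (Real.rpow_add_rpow_le_add (abs_nonneg _) (abs_nonneg _) hp).trans
    (abs_sub_add_abs_sub_sub_eq_abs_sub hf hmono x₁ x₂).le
end

section
/- Let y : ℝⁿ → ℝᴷ be a 1-Lipschitz map with respect to L²-norms (a single-L2NNN classifier's logit map). Suppose for input x₁ the classifier outputs label i with confidence gap g(x₁) = y_i(x₁) - max_{k≠i} y_k(x₁) > 0, and for input x₂ the classifier outputs a different label j (so y_j(x₂) ≥ y_i(x₂)). Then ‖x₂ - x₁‖₂ ≥ g(x₁)/√2. -/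
/-! Nonexpansiveness bounds the change of the logit vector by `‖x₂ - x₁‖`, while flipping the
order of the logits `i` and `j` moves the difference `yᵢ - yⱼ` by at least `g`. Since
`|vᵢ - vⱼ| ≤ √2 ‖v‖` for any vector `v`, this forces `g ≤ √2 ‖x₂ - x₁‖`. -/

namespace EuclideanSpace

variable {ι : Type*} [Fintype ι]

theorem sq_add_sq_le_norm_sq (v : EuclideanSpace ℝ ι) {i j : ι} (hij : i ≠ j) :
    v i ^ 2 + v j ^ 2 ≤ ‖v‖ ^ 2 := by
  classical
  rw [real_norm_sq_eq, ← Finset.sum_pair (f := fun k => v k ^ 2) hij]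
  exact Finset.sum_le_sum_of_subset_of_nonneg (Finset.subset_univ _)
    fun k _ _ => sq_nonneg (v k)

theorem sub_le_sqrt_two_mul_norm (v : EuclideanSpace ℝ ι) {i j : ι} (hij : i ≠ j) :
    v i - v j ≤ √2 * ‖v‖ := by
  have hsq : (v i - v j) ^ 2 ≤ (√2 * ‖v‖) ^ 2 := by
    rw [mul_pow, Real.sq_sqrt zero_le_two]
    nlinarith [sq_add_sq_le_norm_sq v hij, sq_nonneg (v i + v j)]
  exact (abs_le_of_sq_le_sq' hsq (by positivity)).2

end EuclideanSpace

theorem sub_le_sqrt_two_mul_norm_of_nonexpansive {E ι : Type*} [SeminormedAddCommGroup E]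
    [Fintype ι] {y : E → EuclideanSpace ℝ ι} (hy : ∀ a b, ‖y a - y b‖ ≤ ‖a - b‖)
    {x₁ x₂ : E} {i j : ι} (hij : i ≠ j) (hx₂ : y x₂ i ≤ y x₂ j) :
    y x₁ i - y x₁ j ≤ √2 * ‖x₂ - x₁‖ := by
  have hd := (y x₁ - y x₂).sub_le_sqrt_two_mul_norm hij
  simp only [PiLp.sub_apply] at hd
  calc y x₁ i - y x₁ j ≤ √2 * ‖y x₁ - y x₂‖ := by linarith
    _ ≤ √2 * ‖x₂ - x₁‖ := by
      rw [norm_sub_rev x₂]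
      exact mul_le_mul_of_nonneg_left (hy x₁ x₂) (Real.sqrt_nonneg 2)

theorem stmt_3_general (n K : ℕ)
    (y : EuclideanSpace ℝ (Fin n) → EuclideanSpace ℝ (Fin K))
    (hy : ∀ a b, ‖y a - y b‖ ≤ ‖a - b‖)
    (x₁ x₂ : EuclideanSpace ℝ (Fin n)) (i j : Fin K) (hij : i ≠ j)
    (g : ℝ)
    (hg : g = y x₁ i -
      (Finset.univ.erase i).sup'
        ⟨j, Finset.mem_erase.mpr ⟨hij.symm, Finset.mem_univ j⟩⟩ (fun k => y x₁ k))
    (hx₂ : y x₂ i ≤ y x₂ j) :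
    ‖x₂ - x₁‖ ≥ g / Real.sqrt 2 := by
  have hgap : g ≤ y x₁ i - y x₁ j := by
    rw [hg]
    exact sub_le_sub_left (Finset.le_sup' (fun k => y x₁ k)
      (Finset.mem_erase.mpr ⟨hij.symm, Finset.mem_univ j⟩)) _
  rw [ge_iff_le, div_le_iff₀ (by positivity), mul_comm]
  exact hgap.trans (sub_le_sqrt_two_mul_norm_of_nonexpansive hy hij hx₂)

theorem stmt_3 (n K : ℕ)
    (y : EuclideanSpace ℝ (Fin n) → EuclideanSpace ℝ (Fin K))
    (hy : ∀ a b, ‖y a - y b‖ ≤ ‖a - b‖)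
    (x₁ x₂ : EuclideanSpace ℝ (Fin n)) (i j : Fin K) (hij : i ≠ j)
    (g : ℝ)
    (hg : g = y x₁ i -
      (Finset.univ.erase i).sup'
        ⟨j, Finset.mem_erase.mpr ⟨hij.symm, Finset.mem_univ j⟩⟩ (fun k => y x₁ k))
    (hgpos : 0 < g)
    (hx₂ : y x₂ i ≤ y x₂ j) :
    ‖x₂ - x₁‖ ≥ g / Real.sqrt 2 :=
  stmt_3_general n K y hy x₁ x₂ i j hij g hg hx₂
end

section
/- Let each logit y_k : ℝⁿ → ℝ (k = 1,…,K) be individually 1-Lipschitz with respect to the L²-norm on inputs (a multi-L2NNN classifier). Suppose x₁ is classified as label i with confidence gap g(x₁) = y_i(x₁) - max_{k≠i} y_k(x₁) > 0, and x₂ is classified as a different label j (so y_j(x₂) ≥ y_i(x₂)). Then ‖x₂ - x₁‖₂ ≥ g(x₁)/2. -/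
/-! The margin `y i - y j` of two 1-Lipschitz logits is 2-Lipschitz. It is at least the confidence
gap `g` at `x₁` and nonpositive at `x₂`, so it must drop by at least `g` between the two points,
which forces `2 ‖x₂ - x₁‖ ≥ g`. -/

lemma sub_le_two_mul_dist_of_le {α : Type*} [PseudoMetricSpace α] {f h : α → ℝ}
    (hf : LipschitzWith 1 f) (hh : LipschitzWith 1 h) {x₁ x₂ : α} (h₂ : f x₂ ≤ h x₂) :
    f x₁ - h x₁ ≤ 2 * dist x₁ x₂ := by
  have hsub : LipschitzWith 2 fun x => f x - h x := by
    simpa only [one_add_one_eq_two] using hf.sub hh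
  have := hsub.le_add_mul x₁ x₂
  simp only [NNReal.coe_ofNat] at this
  linarith

theorem stmt_5_general (n K : ℕ)
    (y : Fin K → EuclideanSpace ℝ (Fin n) → ℝ)
    (hy : ∀ k, ∀ a b, |y k a - y k b| ≤ ‖a - b‖)
    (x₁ x₂ : EuclideanSpace ℝ (Fin n)) (i j : Fin K) (hij : i ≠ j)
    (g : ℝ)
    (hg : g = y i x₁ -
      (Finset.univ.erase i).sup'
        ⟨j, Finset.mem_erase.mpr ⟨hij.symm, Finset.mem_univ j⟩⟩ (fun k => y k x₁))
    (hx₂ : y i x₂ ≤ y j x₂) :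
    ‖x₂ - x₁‖ ≥ g / 2 := by
  have hlip : ∀ k, LipschitzWith 1 (y k) := fun k =>
    LipschitzWith.of_dist_le_mul fun a b => by
      simpa [Real.dist_eq, dist_eq_norm] using hy k a b
  have hgap : g ≤ y i x₁ - y j x₁ := by
    rw [hg]
    gcongr
    exact Finset.le_sup' (fun k => y k x₁) (Finset.mem_erase.mpr ⟨hij.symm, Finset.mem_univ j⟩)
  have hmargin := sub_le_two_mul_dist_of_le (hlip i) (hlip j) (x₁ := x₁) hx₂
  rw [dist_comm, dist_eq_norm] at hmargin
  linarith

theorem stmt_5 (n K : ℕ)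
    (y : Fin K → EuclideanSpace ℝ (Fin n) → ℝ)
    (hy : ∀ k, ∀ a b, |y k a - y k b| ≤ ‖a - b‖)
    (x₁ x₂ : EuclideanSpace ℝ (Fin n)) (i j : Fin K) (hij : i ≠ j)
    (g : ℝ)
    (hg : g = y i x₁ -
      (Finset.univ.erase i).sup'
        ⟨j, Finset.mem_erase.mpr ⟨hij.symm, Finset.mem_univ j⟩⟩ (fun k => y k x₁))
    (hgpos : 0 < g)
    (hx₂ : y i x₂ ≤ y j x₂) :
    ‖x₂ - x₁‖ ≥ g / 2 :=
  stmt_5_general n K y hy x₁ x₂ i j hij g hg hx₂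
end

section
/- Let y : ℝⁿ → ℝᴷ be 1-Lipschitz with respect to L²-norms, and suppose for x₁, x₂ the classifier assigns different labels i and j with positive confidence gaps g(x₁) and g(x₂). Then ‖x₂ - x₁‖₂ ≥ (g(x₁) + g(x₂))/√2. -/
/-! The two gaps add up to at most the difference `d i - d j` of two coordinates of `d = y x₁ - y x₂`;
such a difference is at most `√2 ‖d‖` since `(a - b)² ≤ 2 (a² + b²)`, and `‖d‖ ≤ ‖x₂ - x₁‖`. -/

theorem EuclideanSpace.sub_apply_le_sqrt_two_mul_norm {ι : Type*} [Fintype ι]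
    (x : EuclideanSpace ℝ ι) {i j : ι} (hij : i ≠ j) :
    x i - x j ≤ √2 * ‖x‖ := by
  classical
  have hpair : x i ^ 2 + x j ^ 2 ≤ ‖x‖ ^ 2 := by
    rw [EuclideanSpace.real_norm_sq_eq, ← Finset.sum_pair (f := fun k => x k ^ 2) hij]
    exact Finset.sum_le_sum_of_subset_of_nonneg (Finset.subset_univ _)
      fun k _ _ => sq_nonneg _
  rw [← Real.sqrt_sq (norm_nonneg x), ← Real.sqrt_mul zero_le_two]
  apply Real.le_sqrt_of_sq_le
  nlinarith [sq_nonneg (x i + x j)]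

theorem stmt_18_general (n K : ℕ)
    (y : EuclideanSpace ℝ (Fin n) → EuclideanSpace ℝ (Fin K))
    (hy : ∀ a b, ‖y a - y b‖ ≤ ‖a - b‖)
    (x₁ x₂ : EuclideanSpace ℝ (Fin n)) (i j : Fin K) (hij : i ≠ j)
    (g₁ g₂ : ℝ)
    (hg₁ : g₁ = y x₁ i -
      (Finset.univ.erase i).sup'
        ⟨j, Finset.mem_erase.mpr ⟨hij.symm, Finset.mem_univ j⟩⟩ (fun k => y x₁ k))
    (hg₂ : g₂ = y x₂ j -
      (Finset.univ.erase j).sup'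
        ⟨i, Finset.mem_erase.mpr ⟨hij, Finset.mem_univ i⟩⟩ (fun k => y x₂ k)) :
    ‖x₂ - x₁‖ ≥ (g₁ + g₂) / Real.sqrt 2 := by
  have h₁ : g₁ ≤ y x₁ i - y x₁ j :=
    hg₁ ▸ sub_le_sub_left (Finset.le_sup' _ (by simpa using hij.symm)) _
  have h₂ : g₂ ≤ y x₂ j - y x₂ i :=
    hg₂ ▸ sub_le_sub_left (Finset.le_sup' _ (by simpa using hij)) _
  rw [ge_iff_le, div_le_iff₀' (by positivity)]
  calc g₁ + g₂ ≤ (y x₁ - y x₂) i - (y x₁ - y x₂) j := by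
        simp only [PiLp.sub_apply]; linarith
    _ ≤ √2 * ‖y x₁ - y x₂‖ := (y x₁ - y x₂).sub_apply_le_sqrt_two_mul_norm hij
    _ ≤ √2 * ‖x₂ - x₁‖ := by gcongr; exact norm_sub_rev x₂ x₁ ▸ hy x₁ x₂

theorem stmt_18 (n K : ℕ)
    (y : EuclideanSpace ℝ (Fin n) → EuclideanSpace ℝ (Fin K))
    (hy : ∀ a b, ‖y a - y b‖ ≤ ‖a - b‖)
    (x₁ x₂ : EuclideanSpace ℝ (Fin n)) (i j : Fin K) (hij : i ≠ j)
    (g₁ g₂ : ℝ)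
    (hg₁ : g₁ = y x₁ i -
      (Finset.univ.erase i).sup'
        ⟨j, Finset.mem_erase.mpr ⟨hij.symm, Finset.mem_univ j⟩⟩ (fun k => y x₁ k))
    (hg₂ : g₂ = y x₂ j -
      (Finset.univ.erase j).sup'
        ⟨i, Finset.mem_erase.mpr ⟨hij, Finset.mem_univ i⟩⟩ (fun k => y x₂ k))
    (hg₁pos : 0 < g₁) (hg₂pos : 0 < g₂) :
    ‖x₂ - x₁‖ ≥ (g₁ + g₂) / Real.sqrt 2 :=
  stmt_18_general n K y hy x₁ x₂ i j hij g₁ g₂ hg₁ hg₂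
end

section
/- Let each logit y_k : ℝⁿ → ℝ be 1-Lipschitz with respect to the L²-norm, and suppose x₁, x₂ receive different predicted labels i and j with positive confidence gaps g(x₁), g(x₂). Then ‖x₂ - x₁‖₂ ≥ (g(x₁) + g(x₂))/2. -/
/-!
The gap at `x₁` is at most the margin `y i x₁ - y j x₁` and the gap at `x₂` at most
`y j x₂ - y i x₂`. The margin `y i - y j` is 2-Lipschitz as a difference of two 1-Lipschitz
functions, and it drops by the sum of the two gaps from `x₁` to `x₂`.
-/

theorem sub_sup'_erase_le_sub_of_ne {ι α : Type*} [Fintype ι] [DecidableEq ι]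
    [AddCommGroup α] [LinearOrder α] [IsOrderedAddMonoid α] (f : ι → α) {i j : ι} (hij : i ≠ j)
    (H : (Finset.univ.erase i).Nonempty) :
    f i - (Finset.univ.erase i).sup' H f ≤ f i - f j :=
  sub_le_sub_left (Finset.le_sup' f (Finset.mem_erase.mpr ⟨hij.symm, Finset.mem_univ j⟩)) _

theorem LipschitzWith.sub_add_sub_le_two_mul_dist {α : Type*} [PseudoMetricSpace α]
    {f h : α → ℝ} (hf : LipschitzWith 1 f) (hh : LipschitzWith 1 h) (a b : α) :
    (f a - h a) + (h b - f b) ≤ 2 * dist a b := by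
  have := (hf.sub hh).le_add_mul a b
  simp only [NNReal.coe_add, NNReal.coe_one] at this
  linarith

theorem stmt_19_general (n K : ℕ)
    (y : Fin K → EuclideanSpace ℝ (Fin n) → ℝ)
    (hy : ∀ k, ∀ a b, |y k a - y k b| ≤ ‖a - b‖)
    (x₁ x₂ : EuclideanSpace ℝ (Fin n)) (i j : Fin K) (hij : i ≠ j)
    (g₁ g₂ : ℝ)
    (hg₁ : g₁ = y i x₁ -
      (Finset.univ.erase i).sup'
        ⟨j, Finset.mem_erase.mpr ⟨hij.symm, Finset.mem_univ j⟩⟩ (fun k => y k x₁))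
    (hg₂ : g₂ = y j x₂ -
      (Finset.univ.erase j).sup'
        ⟨i, Finset.mem_erase.mpr ⟨hij, Finset.mem_univ i⟩⟩ (fun k => y k x₂)) :
    ‖x₂ - x₁‖ ≥ (g₁ + g₂) / 2 := by
  have hLip (k : Fin K) : LipschitzWith 1 (y k) :=
    LipschitzWith.mk_one fun a b => by rw [Real.dist_eq, dist_eq_norm]; exact hy k a b
  have h₁ : g₁ ≤ y i x₁ - y j x₁ := hg₁ ▸ sub_sup'_erase_le_sub_of_ne (y · x₁) hij _
  have h₂ : g₂ ≤ y j x₂ - y i x₂ := hg₂ ▸ sub_sup'_erase_le_sub_of_ne (y · x₂) hij.symm _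
  have h := (hLip i).sub_add_sub_le_two_mul_dist (hLip j) x₁ x₂
  rw [dist_comm, dist_eq_norm] at h
  linarith

theorem stmt_19 (n K : ℕ)
    (y : Fin K → EuclideanSpace ℝ (Fin n) → ℝ)
    (hy : ∀ k, ∀ a b, |y k a - y k b| ≤ ‖a - b‖)
    (x₁ x₂ : EuclideanSpace ℝ (Fin n)) (i j : Fin K) (hij : i ≠ j)
    (g₁ g₂ : ℝ)
    (hg₁ : g₁ = y i x₁ -
      (Finset.univ.erase i).sup'
        ⟨j, Finset.mem_erase.mpr ⟨hij.symm, Finset.mem_univ j⟩⟩ (fun k => y k x₁))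
    (hg₂ : g₂ = y j x₂ -
      (Finset.univ.erase j).sup'
        ⟨i, Finset.mem_erase.mpr ⟨hij, Finset.mem_univ i⟩⟩ (fun k => y k x₂))
    (hg₁pos : 0 < g₁) (hg₂pos : 0 < g₂) :
    ‖x₂ - x₁‖ ≥ (g₁ + g₂) / 2 :=
  stmt_19_general n K y hy x₁ x₂ i j hij g₁ g₂ hg₁ hg₂
end
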